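/- Appendix pressure bound (finite-volume subset gas): let V be a finite set, P_Λ = {x ⊆ Λ : x ≠ ∅} the polymers contained in Λ ⊆ V, with incompatibility W(x,y) = 0 iff x ∩ y ≠ ∅ (in particular every x overlaps itself). Suppose μ : P_V → ℝ≥0 and p : P_V → ℝ≥0 satisfy p_x · Z_{Γ*(x)}(μ) ≤ μ_x for all polymers x, and Σ_{x ∋ v} μ_x ≤ K for every v ∈ V. Then |log Z_{P_Λ}(−p)| ≤ K·|Λ|, i.e., the pressure |log Z_{P_Λ}(−p)|/|Λ| is bounded by K uniformly in Λ. -/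

import Mathlib

open Finset

def indepSet {P : Type*} [DecidableEq P] (W : P → P → ℕ) (S : Finset P) : Prop :=
  ∀ x ∈ S, ∀ y ∈ S, x ≠ y → W x y = 1

instance {P : Type*} [DecidableEq P] (W : P → P → ℕ) : DecidablePred (indepSet W) :=
  fun _ => by unfold indepSet; infer_instance

/-- Polymer partition function `Z_Λ(a) = Σ_{S ⊆ Λ independent} Π_{y ∈ S} a y`. -/
def Zpart {P : Type*} [DecidableEq P] {R : Type*} [CommRing R] (W : P → P → ℕ)
    (Λ : Finset P) (a : P → R) : R :=
  ∑ S ∈ Λ.powerset.filter (indepSet W), ∏ y ∈ S, a y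

/-- `Γ*(x)`: the set of polymers incompatible with `x`. -/
def Γstar {P : Type*} [Fintype P] [DecidableEq P] (W : P → P → ℕ) (x : P) : Finset P :=
  Finset.univ.filter fun y => W x y = 0

/-! Write `Z_S` for the partition function of the polymers in `S`. For the activity `-p`,
deleting a polymer `y ∈ S` gives `Z_S = Z_{S ∖ y} - p_y Z_{S_y}`, where `S_y` are the polymers of
`S` compatible with `y`. A strong induction on `S`, whose base case is the Fernández–Procacci
condition `p_x Z_{Γ*(x)}(μ) ≤ μ_x`, shows `Z_S(-p) > 0` and
`Z_S(-p) ≤ (1 + μ_x) Z_{S ∪ x}(-p) ≤ (1 + μ_x) Z_S(-p)`. Hence `-∑_{x ∈ S} μ_x ≤ log Z_S(-p) ≤ 0`,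
and grouping the nonempty subsets of `Λ` by a point they contain bounds that sum by `K |Λ|`. -/

section Zpart

variable {P : Type*} [DecidableEq P] {W : P → P → ℕ}

lemma indepSet_mono {S T : Finset P} (hST : S ⊆ T) (hT : indepSet W T) : indepSet W S :=
  fun x hx y hy => hT x (hST hx) y (hST hy)

variable (W) in
lemma Zpart_empty (a : P → ℝ) : Zpart W ∅ a = 1 := by
  simp [Zpart, filter_singleton, indepSet]

lemma Zpart_mono {A B : Finset P} (hAB : A ⊆ B) {a : P → ℝ} (ha : ∀ x, 0 ≤ a x) :
    Zpart W A a ≤ Zpart W B a :=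
  sum_le_sum_of_subset_of_nonneg (filter_subset_filter _ (powerset_mono.2 hAB))
    fun _ _ _ => prod_nonneg fun y _ => ha y

lemma one_add_le_Zpart {A : Finset P} {x : P} (hx : x ∈ A) {a : P → ℝ} (ha : ∀ x, 0 ≤ a x) :
    1 + a x ≤ Zpart W A a := by
  have hsub : {∅, {x}} ⊆ A.powerset.filter (indepSet W) := by
    simp [insert_subset_iff, hx, indepSet]
  calc 1 + a x = ∑ S ∈ {∅, {x}}, ∏ y ∈ S, a y := by
        rw [sum_pair (singleton_ne_empty x).symm]; simp
    _ ≤ Zpart W A a :=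
        sum_le_sum_of_subset_of_nonneg hsub fun _ _ _ => prod_nonneg fun y _ => ha y

lemma Zpart_le_mul_of_subset_union {A B C : Finset P} (hA : A ⊆ B ∪ C) {a : P → ℝ}
    (ha : ∀ x, 0 ≤ a x) : Zpart W A a ≤ Zpart W B a * Zpart W C a := by
  let split : Finset P → Finset P × Finset P := fun S => (S.filter (· ∈ B), S.filter (· ∉ B))
  have hinj : Set.InjOn split ↑(A.powerset.filter (indepSet W)) := by
    intro S _ T _ h
    rw [← filter_union_filter_not_eq (· ∈ B) S, ← filter_union_filter_not_eq (· ∈ B) T]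
    simp only [split, Prod.ext_iff] at h
    rw [h.1, h.2]
  have hmaps : (A.powerset.filter (indepSet W)).image split ⊆
      B.powerset.filter (indepSet W) ×ˢ C.powerset.filter (indepSet W) := by
    simp only [image_subset_iff, mem_product, mem_filter, mem_powerset, split]
    rintro S ⟨hSA, hS⟩
    refine ⟨⟨fun y hy => (mem_filter.1 hy).2, indepSet_mono (filter_subset _ _) hS⟩,
      ⟨fun y hy => ?_, indepSet_mono (filter_subset _ _) hS⟩⟩
    obtain ⟨hyS, hyB⟩ := mem_filter.1 hy
    exact (mem_union.1 (hA (hSA hyS))).resolve_left hyB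
  calc Zpart W A a
      = ∑ S ∈ A.powerset.filter (indepSet W), (∏ y ∈ (split S).1, a y) * ∏ y ∈ (split S).2, a y :=
        sum_congr rfl fun S _ => (prod_filter_mul_prod_filter_not S _ a).symm
    _ = ∑ T ∈ (A.powerset.filter (indepSet W)).image split, (∏ y ∈ T.1, a y) * ∏ y ∈ T.2, a y :=
        (sum_image (f := fun T => (∏ y ∈ T.1, a y) * ∏ y ∈ T.2, a y) hinj).symm
    _ ≤ ∑ T ∈ B.powerset.filter (indepSet W) ×ˢ C.powerset.filter (indepSet W),
          (∏ y ∈ T.1, a y) * ∏ y ∈ T.2, a y :=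
        sum_le_sum_of_subset_of_nonneg hmaps fun _ _ _ =>
          mul_nonneg (prod_nonneg fun y _ => ha y) (prod_nonneg fun y _ => ha y)
    _ = Zpart W B a * Zpart W C a := by rw [Zpart, Zpart, sum_mul_sum, sum_product]

end Zpart

section Compat

variable {P : Type*} [DecidableEq P] {r : P → P → Prop} [DecidableRel r]

variable (r) in
def compatWeight : P → P → ℕ := fun x y => if r x y then 1 else 0

lemma indepSet_compatWeight_iff {S : Finset P} :
    indepSet (compatWeight r) S ↔ (S : Set P).Pairwise r := by
  simp [indepSet, compatWeight, Set.Pairwise]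

lemma indepSet_compatWeight_insert_iff [Std.Symm r] {S : Finset P} {x : P} (hx : x ∉ S) :
    indepSet (compatWeight r) (insert x S) ↔ indepSet (compatWeight r) S ∧ ∀ y ∈ S, r x y := by
  rw [indepSet_compatWeight_iff, indepSet_compatWeight_iff, coe_insert,
    Set.pairwise_insert_of_symm_of_notMem (mem_coe.not.2 hx)]
  rfl

lemma Zpart_eq_erase_add [Std.Symm r] {A : Finset P} {x : P} (hx : x ∈ A) (a : P → ℝ) :
    Zpart (compatWeight r) A a = Zpart (compatWeight r) (A.erase x) a
      + a x * Zpart (compatWeight r) ((A.erase x).filter (r x)) a := by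
  set B := (A.erase x).filter (r x)
  have hxA : x ∉ A.erase x := notMem_erase x A
  have hinsert : ∀ T ⊆ A.erase x, indepSet (compatWeight r) (insert x T) ↔
      indepSet (compatWeight r) T ∧ T ⊆ B := fun T hT => by
    rw [indepSet_compatWeight_insert_iff (notMem_mono hT hxA)]
    exact and_congr_right fun _ => ⟨fun h y hy => mem_filter.2 ⟨hT hy, h y hy⟩,
      fun h y hy => (mem_filter.1 (h hy)).2⟩
  simp only [Zpart, sum_filter]
  conv_lhs => rw [← insert_erase hx, sum_powerset_insert hxA]
  congr 1
  rw [mul_sum]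
  refine (sum_subset (powerset_mono.2 (filter_subset _ _)) fun T hT hTB => ?_).symm.trans
    (sum_congr rfl fun T hT => ?_)
  · rw [if_neg fun h => hTB (mem_powerset.2 ((hinsert T (mem_powerset.1 hT)).1 h).2)]
  · have hTA : T ⊆ A.erase x := (mem_powerset.1 hT).trans (filter_subset _ _)
    rw [prod_insert (notMem_mono hTA hxA), mul_ite, mul_zero]
    exact if_congr ((hinsert T hTA).trans (and_iff_left (mem_powerset.1 hT))) rfl rfl

end Compat

section Ratio

variable {P : Type*} [Fintype P] [DecidableEq P] {r : P → P → Prop} [DecidableRel r]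
  {μ p : P → ℝ}

lemma mem_Γstar_compatWeight {x y : P} : y ∈ Γstar (compatWeight r) x ↔ ¬ r x y := by
  simp [Γstar, compatWeight]

variable (r μ p) in
/-- The inductive invariant of the argument. Without the factor `Z_{Γ*(x) ∖ S}(μ)` it would not
survive the passage from `S.erase y` to `S` for a polymer `y` incompatible with `x`. -/
def RatioBound (S : Finset P) (x : P) : Prop :=
  p x * Zpart (compatWeight r) (S.filter (r x)) (-p)
      * Zpart (compatWeight r) (Γstar (compatWeight r) x \ S) μ
    ≤ μ x * Zpart (compatWeight r) S (-p)

lemma ratioBound_of_forall_compat (hμ : ∀ x, 0 ≤ μ x) (hp : ∀ x, 0 ≤ p x)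
    (hFP : ∀ x, ¬ r x x → p x * Zpart (compatWeight r) (Γstar (compatWeight r) x) μ ≤ μ x)
    {S : Finset P} {x : P} (hxx : ¬ r x x) (hcompat : ∀ y ∈ S, r x y)
    (hS : 0 ≤ Zpart (compatWeight r) S (-p)) : RatioBound r μ p S x := by
  rw [RatioBound, filter_true_of_mem hcompat]
  calc _ ≤ p x * Zpart (compatWeight r) S (-p)
        * Zpart (compatWeight r) (Γstar (compatWeight r) x) μ :=
        mul_le_mul_of_nonneg_left (Zpart_mono sdiff_subset hμ) (mul_nonneg (hp x) hS)
    _ ≤ μ x * Zpart (compatWeight r) S (-p) := by nlinarith [hFP x hxx]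

lemma ratioBound_of_not_compat [Std.Symm r] (hμ : ∀ x, 0 ≤ μ x) (hp : ∀ x, 0 ≤ p x)
    {S : Finset P} {x y : P} (hy : y ∈ S) (hxy : ¬ r x y) (hyy : ¬ r y y)
    (hratio_x : RatioBound r μ p (S.erase y) x) (hratio_y : RatioBound r μ p (S.erase y) y)
    (hSx : 0 ≤ Zpart (compatWeight r) ((S.erase y).filter (r x)) (-p)) :
    RatioBound r μ p S x := by
  have hZS := Zpart_eq_erase_add (r := r) hy (-p)
  set S' := S.erase y
  set X := Γstar (compatWeight r) x \ S
  set X' := Γstar (compatWeight r) x \ S'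
  set C := Γstar (compatWeight r) y \ S'
  have hfilter : S.filter (r x) = S'.filter (r x) := by
    rw [filter_erase, erase_eq_of_notMem fun h => hxy (mem_filter.1 h).2]
  have hX : X'.erase y = X := by
    rw [← sdiff_insert, insert_erase hy]
  have hyX' : y ∈ X' := mem_sdiff.2 ⟨mem_Γstar_compatWeight.2 hxy, notMem_erase y S⟩
  have hZX' := Zpart_eq_erase_add (r := r) hyX' μ
  rw [hX] at hZX'
  have hsplit : Zpart (compatWeight r) X' μ
      ≤ Zpart (compatWeight r) (X.filter (r y)) μ * Zpart (compatWeight r) C μ := by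
    refine Zpart_le_mul_of_subset_union (fun u hu => ?_) hμ
    by_cases hyu : r y u
    · refine mem_union_left _ (mem_filter.2 ⟨hX ▸ mem_erase.2 ⟨?_, hu⟩, hyu⟩)
      rintro rfl
      exact hyy hyu
    · exact mem_union_right _ (mem_sdiff.2 ⟨mem_Γstar_compatWeight.2 hyu, (mem_sdiff.1 hu).2⟩)
  have hC : 1 + μ y ≤ Zpart (compatWeight r) C μ :=
    one_add_le_Zpart (mem_sdiff.2 ⟨mem_Γstar_compatWeight.2 hyy, notMem_erase y S⟩) hμ
  set c := Zpart (compatWeight r) C μ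
  rw [RatioBound, hfilter]
  refine le_of_mul_le_mul_left ?_ (by linarith [hμ y] : 0 < c)
  -- After multiplying by `c`, both sides compare with `μ_x Z_{S'}(-p) (c - μ_y)`.
  calc c * (p x * Zpart (compatWeight r) (S'.filter (r x)) (-p) * Zpart (compatWeight r) X μ)
      = p x * Zpart (compatWeight r) (S'.filter (r x)) (-p)
          * (Zpart (compatWeight r) X' μ * c
            - μ y * (Zpart (compatWeight r) (X.filter (r y)) μ * c)) := by
        rw [hZX']; ring
    _ ≤ p x * Zpart (compatWeight r) (S'.filter (r x)) (-p)
          * (Zpart (compatWeight r) X' μ * c - μ y * Zpart (compatWeight r) X' μ) := by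
        gcongr
        · exact mul_nonneg (hp x) hSx
        · exact hμ y
    _ = p x * Zpart (compatWeight r) (S'.filter (r x)) (-p) * Zpart (compatWeight r) X' μ
          * (c - μ y) := by ring
    _ ≤ μ x * Zpart (compatWeight r) S' (-p) * (c - μ y) :=
        mul_le_mul_of_nonneg_right hratio_x (by linarith)
    _ ≤ μ x * (c * Zpart (compatWeight r) S' (-p)
          - p y * Zpart (compatWeight r) (S'.filter (r y)) (-p) * c) := by
        rw [RatioBound] at hratio_y
        nlinarith [hμ x]
    _ = c * (μ x * Zpart (compatWeight r) S (-p)) := by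
        rw [hZS, Pi.neg_apply]; ring

end Ratio

section FernandezProcacci

variable {P : Type*} [Fintype P] [DecidableEq P] {r : P → P → Prop} [DecidableRel r]
  [Std.Symm r] {μ p : P → ℝ}

lemma Zpart_le_one_add_mul_insert (hμ : ∀ x, 0 ≤ μ x) (hp : ∀ x, 0 ≤ p x) {S : Finset P}
    {x : P} (hx : x ∉ S) (hxx : ¬ r x x)
    (hSx : 0 ≤ Zpart (compatWeight r) (S.filter (r x)) (-p)) (hratio : RatioBound r μ p S x) :
    Zpart (compatWeight r) S (-p) ≤ (1 + μ x) * Zpart (compatWeight r) (insert x S) (-p) := by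
  have hZ := Zpart_eq_erase_add (r := r) (mem_insert_self x S) (-p)
  rw [erase_insert hx, Pi.neg_apply] at hZ
  have hΓ : 1 + μ x ≤ Zpart (compatWeight r) (Γstar (compatWeight r) x \ S) μ :=
    one_add_le_Zpart (mem_sdiff.2 ⟨mem_Γstar_compatWeight.2 hxx, hx⟩) hμ
  have : p x * Zpart (compatWeight r) (S.filter (r x)) (-p) * (1 + μ x)
      ≤ μ x * Zpart (compatWeight r) S (-p) :=
    (mul_le_mul_of_nonneg_left hΓ (mul_nonneg (hp x) hSx)).trans hratio
  rw [hZ]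
  linarith

variable (hμ : ∀ x, 0 ≤ μ x) (hp : ∀ x, 0 ≤ p x)
  (hFP : ∀ x, ¬ r x x → p x * Zpart (compatWeight r) (Γstar (compatWeight r) x) μ ≤ μ x)
include hμ hp hFP

theorem Zpart_neg_pos_and_ratioBound (S : Finset P) (hS : ∀ y ∈ S, ¬ r y y) :
    0 < Zpart (compatWeight r) S (-p) ∧ ∀ x ∉ S, ¬ r x x → RatioBound r μ p S x := by
  induction S using Finset.strongInduction with
  | H S ih =>
  have ih' : ∀ T ⊂ S, 0 < Zpart (compatWeight r) T (-p) ∧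
      ∀ x ∉ T, ¬ r x x → RatioBound r μ p T x :=
    fun T hT => ih T hT fun y hy => hS y (hT.subset hy)
  have hpos : 0 < Zpart (compatWeight r) S (-p) := by
    obtain rfl | ⟨z, hz⟩ := S.eq_empty_or_nonempty
    · simp [Zpart_empty]
    obtain ⟨hpos', hratio'⟩ := ih' (S.erase z) (erase_ssubset hz)
    have hSz := (ih' _ ((filter_subset (r z) _).trans_ssubset (erase_ssubset hz))).1
    have := Zpart_le_one_add_mul_insert hμ hp (notMem_erase z S) (hS z hz) hSz.le
      (hratio' z (notMem_erase z S) (hS z hz))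
    rw [insert_erase hz] at this
    exact pos_of_mul_pos_right (hpos'.trans_le this) (by linarith [hμ z])
  refine ⟨hpos, fun x hx hxx => ?_⟩
  by_cases hcompat : ∀ y ∈ S, r x y
  · exact ratioBound_of_forall_compat hμ hp hFP hxx hcompat hpos.le
  push Not at hcompat
  obtain ⟨y, hy, hxy⟩ := hcompat
  obtain ⟨-, hratio'⟩ := ih' (S.erase y) (erase_ssubset hy)
  have hSx := (ih' _ ((filter_subset (r x) _).trans_ssubset (erase_ssubset hy))).1
  exact ratioBound_of_not_compat hμ hp hy hxy (hS y hy)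
    (hratio' x (fun h => hx (mem_of_mem_erase h)) hxx)
    (hratio' y (notMem_erase y S) (hS y hy)) hSx.le

lemma Zpart_neg_insert_le {S : Finset P} (hS : ∀ y ∈ S, ¬ r y y) {x : P} (hx : x ∉ S) :
    Zpart (compatWeight r) (insert x S) (-p) ≤ Zpart (compatWeight r) S (-p) := by
  have hZ := Zpart_eq_erase_add (r := r) (mem_insert_self x S) (-p)
  rw [erase_insert hx, Pi.neg_apply] at hZ
  have hSx := (Zpart_neg_pos_and_ratioBound hμ hp hFP (S.filter (r x))
    fun y hy => hS y (mem_of_mem_filter y hy)).1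
  rw [hZ]
  nlinarith [hp x]

lemma Zpart_neg_le_one {S : Finset P} (hS : ∀ y ∈ S, ¬ r y y) :
    Zpart (compatWeight r) S (-p) ≤ 1 := by
  induction S using Finset.induction_on with
  | empty => rw [Zpart_empty]
  | insert x S hx ih =>
    have hS' : ∀ y ∈ S, ¬ r y y := fun y hy => hS y (mem_insert_of_mem hy)
    exact (Zpart_neg_insert_le hμ hp hFP hS' hx).trans (ih hS')

lemma neg_sum_le_log_Zpart_neg {S : Finset P} (hS : ∀ y ∈ S, ¬ r y y) :
    -∑ x ∈ S, μ x ≤ Real.log (Zpart (compatWeight r) S (-p)) := by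
  induction S using Finset.induction_on with
  | empty => simp [Zpart_empty]
  | insert x S hx ih =>
    have hS' : ∀ y ∈ S, ¬ r y y := fun y hy => hS y (mem_insert_of_mem hy)
    have hxx : ¬ r x x := hS x (mem_insert_self x S)
    obtain ⟨hpos, hratio⟩ := Zpart_neg_pos_and_ratioBound hμ hp hFP S hS'
    have hpos' := (Zpart_neg_pos_and_ratioBound hμ hp hFP (insert x S) hS).1
    have hSx := (Zpart_neg_pos_and_ratioBound hμ hp hFP (S.filter (r x))
      fun y hy => hS' y (mem_of_mem_filter y hy)).1
    have hle := Zpart_le_one_add_mul_insert hμ hp hx hxx hSx.le (hratio x hx hxx)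
    have h1μ : 0 < 1 + μ x := by linarith [hμ x]
    have hlog := Real.log_le_log hpos hle
    rw [Real.log_mul h1μ.ne' hpos'.ne'] at hlog
    have := Real.log_le_sub_one_of_pos h1μ
    rw [sum_insert hx]
    linarith [ih hS']

theorem abs_log_Zpart_neg_le_sum {S : Finset P} (hS : ∀ y ∈ S, ¬ r y y) :
    |Real.log (Zpart (compatWeight r) S (-p))| ≤ ∑ x ∈ S, μ x := by
  have hpos := (Zpart_neg_pos_and_ratioBound hμ hp hFP S hS).1
  have hlog := Real.log_nonpos hpos.le (Zpart_neg_le_one hμ hp hFP hS)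
  rw [abs_le]
  exact ⟨neg_sum_le_log_Zpart_neg hμ hp hFP hS, hlog.trans (sum_nonneg fun x _ => hμ x)⟩

end FernandezProcacci

lemma sum_nonempty_subsets_le_sum_sum_mem {V : Type*} [Fintype V] [DecidableEq V]
    {μ : Finset V → ℝ} (hμ : ∀ x, 0 ≤ μ x) (Λ : Finset V) :
    ∑ x ∈ Λ.powerset.filter Finset.Nonempty, μ x
      ≤ ∑ v ∈ Λ, ∑ x ∈ Finset.univ.filter (fun x : Finset V => v ∈ x), μ x := by
  calc ∑ x ∈ Λ.powerset.filter Finset.Nonempty, μ x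
      ≤ ∑ x ∈ Λ.powerset.filter Finset.Nonempty, ∑ _v ∈ x, μ x := by
        refine sum_le_sum fun x hx => ?_
        rw [sum_const, nsmul_eq_mul]
        exact le_mul_of_one_le_left (hμ x) (by exact_mod_cast (mem_filter.1 hx).2.card_pos)
    _ = ∑ v ∈ Λ, ∑ x ∈ (Λ.powerset.filter Finset.Nonempty).filter (v ∈ ·), μ x :=
        sum_comm' fun x v => by simp only [mem_filter, mem_powerset]; grind
    _ ≤ ∑ v ∈ Λ, ∑ x ∈ Finset.univ.filter (fun x : Finset V => v ∈ x), μ x :=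
        sum_le_sum fun v _ => sum_le_sum_of_subset_of_nonneg
          (filter_subset_filter _ (subset_univ _)) fun x _ _ => hμ x

theorem subset_gas_pressure_bound {V : Type*} [Fintype V] [DecidableEq V] (K : ℝ)
    (μ p : Finset V → ℝ) (hμ : ∀ x, 0 ≤ μ x) (hp : ∀ x, 0 ≤ p x)
    (hFP : ∀ x : Finset V, x.Nonempty →
      p x * Zpart (fun x y => if Disjoint x y then 1 else 0)
          (Γstar (fun x y => if Disjoint x y then 1 else 0) x) μ ≤ μ x)
    (hK : ∀ v : V, ∑ x ∈ Finset.univ.filter (fun x : Finset V => v ∈ x), μ x ≤ K)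
    (Λ : Finset V) :
    |Real.log (Zpart (fun x y => if Disjoint x y then 1 else 0)
        (Λ.powerset.filter Finset.Nonempty) (fun x => -p x))| ≤ K * Λ.card := by
  have hself : ∀ x : Finset V, ¬ Disjoint x x ↔ x.Nonempty := fun x => by
    rw [disjoint_self_iff_empty, nonempty_iff_ne_empty]
  calc |Real.log (Zpart (compatWeight Disjoint) (Λ.powerset.filter Finset.Nonempty) (-p))|
      ≤ ∑ x ∈ Λ.powerset.filter Finset.Nonempty, μ x :=
        abs_log_Zpart_neg_le_sum hμ hp (fun x hx => hFP x ((hself x).1 hx))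
          fun x hx => (hself x).2 (mem_filter.1 hx).2
    _ ≤ ∑ v ∈ Λ, ∑ x ∈ Finset.univ.filter (fun x : Finset V => v ∈ x), μ x :=
        sum_nonempty_subsets_le_sum_sum_mem hμ Λ
    _ ≤ ∑ _v ∈ Λ, K := sum_le_sum fun v _ => hK v
    _ = K * Λ.card := by rw [sum_const, nsmul_eq_mul, mul_comm]
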